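/- For all n ≥ 2, the sum of the total numbers of consecutive occurrences of the patterns 213, 231 and 312 over all permutations in Av_n(123,132,321) equals (n−2)·((n−1)!! + (n−2)!!); in particular |Av_n(123,132,321)| = (n−1)!! + (n−2)!!. -/
import Mathlib


/-- `ConsecOcc p π i`: the word `π(i) π(i+1) … π(i+r-1)` (positions `0`-indexed)
is order-isomorphic to the pattern word `p 0, …, p (r-1)`. -/
def ConsecOcc {n r : ℕ} (p : Fin r → ℕ) (π : Equiv.Perm (Fin n)) (i : ℕ) : Prop :=
  ∃ h : i + r ≤ n, ∀ j k : Fin r,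
    (π ⟨i + j.val, by have := j.isLt; omega⟩ < π ⟨i + k.val, by have := k.isLt; omega⟩
      ↔ p j < p k)

/-- The number of consecutive occurrences of the pattern `p` in `π`. -/
noncomputable def occCount {n r : ℕ} (p : Fin r → ℕ) (π : Equiv.Perm (Fin n)) : ℕ :=
  Nat.card {i : ℕ // ConsecOcc p π i}

/-- `π` has no consecutive occurrence of any pattern in `ps`. -/
def AvoidsAll {n r : ℕ} (ps : List (Fin r → ℕ)) (π : Equiv.Perm (Fin n)) : Prop :=
  ∀ p ∈ ps, ∀ i, ¬ ConsecOcc p π i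

-- Total number of consecutive occurrences of `p` over all size-`n` permutations satisfying `P`.
open scoped Classical in
noncomputable def totOcc {n r : ℕ} (p : Fin r → ℕ) (P : Equiv.Perm (Fin n) → Prop) : ℕ :=
  ∑ π : Equiv.Perm (Fin n), if P π then occCount p π else 0

/-- The number of size-`n` permutations satisfying `P`. -/
noncomputable def classCard (n : ℕ) (P : Equiv.Perm (Fin n) → Prop) : ℕ :=
  Nat.card {π : Equiv.Perm (Fin n) // P π}

def p123 : Fin 3 → ℕ := ![1,2,3]
def p132 : Fin 3 → ℕ := ![1,3,2]
def p213 : Fin 3 → ℕ := ![2,1,3]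
def p231 : Fin 3 → ℕ := ![2,3,1]
def p312 : Fin 3 → ℕ := ![3,1,2]
def p321 : Fin 3 → ℕ := ![3,2,1]

/-! ### Section A : basic lemmas about consecutive occurrences -/

def Pats : List (Fin 3 → ℕ) := [p123, p132, p321]

instance {n r : ℕ} (p : Fin r → ℕ) (π : Equiv.Perm (Fin n)) (i : ℕ) :
    Decidable (ConsecOcc p π i) := by
  unfold ConsecOcc; exact exists_prop_decidable _

lemma avoidsAll_iff {n : ℕ} (ps : List (Fin 3 → ℕ)) (π : Equiv.Perm (Fin n)) :
    AvoidsAll ps π ↔ ∀ p ∈ ps, ∀ i < n, ¬ ConsecOcc p π i := by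
  constructor
  · intro H p hp i _; exact H p hp i
  · intro H p hp i hocc
    obtain ⟨h, -⟩ := id hocc
    exact H p hp i (by omega) hocc

instance {n : ℕ} (ps : List (Fin 3 → ℕ)) (π : Equiv.Perm (Fin n)) :
    Decidable (AvoidsAll ps π) :=
  decidable_of_iff _ (avoidsAll_iff ps π).symm

def AscEnd {n : ℕ} (π : Equiv.Perm (Fin n)) : Prop :=
  ∀ _ : 2 ≤ n, π ⟨n-2, by omega⟩ < π ⟨n-1, by omega⟩

instance {n : ℕ} (π : Equiv.Perm (Fin n)) : Decidable (AscEnd π) := by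
  unfold AscEnd; infer_instance

lemma consecOcc_iff {n : ℕ} (p : Fin 3 → ℕ) (π : Equiv.Perm (Fin n)) (i : ℕ) (h : i + 3 ≤ n) :
    ConsecOcc p π i ↔ ∀ j k : Fin 3,
      (π ⟨i + j.val, by have := j.isLt; omega⟩ < π ⟨i + k.val, by have := k.isLt; omega⟩
        ↔ p j < p k) := by
  constructor
  · rintro ⟨h', H⟩; exact H
  · intro H; exact ⟨h, H⟩

section PatternIffs
variable {n i : ℕ} (π : Equiv.Perm (Fin n)) (h : i + 3 ≤ n)

lemma occ123_iff : ConsecOcc p123 π i ↔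
    (π ⟨i, by omega⟩ < π ⟨i+1, by omega⟩ ∧ π ⟨i+1, by omega⟩ < π ⟨i+2, by omega⟩) := by
  rw [consecOcc_iff _ _ _ h]
  constructor
  · intro H; exact ⟨(H 0 1).mpr (by decide), (H 1 2).mpr (by decide)⟩
  · rintro ⟨h1, h2⟩ j k
    fin_cases j <;> fin_cases k <;> first
      | exact iff_of_true h1 (by decide)
      | exact iff_of_true h2 (by decide)
      | exact iff_of_true (lt_trans h1 h2) (by decide)
      | exact iff_of_false (lt_asymm h1) (by decide)
      | exact iff_of_false (lt_asymm h2) (by decide)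
      | exact iff_of_false (lt_asymm (lt_trans h1 h2)) (by decide)
      | exact iff_of_false (lt_irrefl _) (by decide)

lemma occ132_iff : ConsecOcc p132 π i ↔
    (π ⟨i, by omega⟩ < π ⟨i+2, by omega⟩ ∧ π ⟨i+2, by omega⟩ < π ⟨i+1, by omega⟩) := by
  rw [consecOcc_iff _ _ _ h]
  constructor
  · intro H; exact ⟨(H 0 2).mpr (by decide), (H 2 1).mpr (by decide)⟩
  · rintro ⟨h1, h2⟩ j k
    fin_cases j <;> fin_cases k <;> first
      | exact iff_of_true h1 (by decide)
      | exact iff_of_true h2 (by decide)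
      | exact iff_of_true (lt_trans h1 h2) (by decide)
      | exact iff_of_false (lt_asymm h1) (by decide)
      | exact iff_of_false (lt_asymm h2) (by decide)
      | exact iff_of_false (lt_asymm (lt_trans h1 h2)) (by decide)
      | exact iff_of_false (lt_irrefl _) (by decide)

lemma occ213_iff : ConsecOcc p213 π i ↔
    (π ⟨i+1, by omega⟩ < π ⟨i, by omega⟩ ∧ π ⟨i, by omega⟩ < π ⟨i+2, by omega⟩) := by
  rw [consecOcc_iff _ _ _ h]
  constructor
  · intro H; exact ⟨(H 1 0).mpr (by decide), (H 0 2).mpr (by decide)⟩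
  · rintro ⟨h1, h2⟩ j k
    fin_cases j <;> fin_cases k <;> first
      | exact iff_of_true h1 (by decide)
      | exact iff_of_true h2 (by decide)
      | exact iff_of_true (lt_trans h1 h2) (by decide)
      | exact iff_of_false (lt_asymm h1) (by decide)
      | exact iff_of_false (lt_asymm h2) (by decide)
      | exact iff_of_false (lt_asymm (lt_trans h1 h2)) (by decide)
      | exact iff_of_false (lt_irrefl _) (by decide)

lemma occ231_iff : ConsecOcc p231 π i ↔
    (π ⟨i+2, by omega⟩ < π ⟨i, by omega⟩ ∧ π ⟨i, by omega⟩ < π ⟨i+1, by omega⟩) := by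
  rw [consecOcc_iff _ _ _ h]
  constructor
  · intro H; exact ⟨(H 2 0).mpr (by decide), (H 0 1).mpr (by decide)⟩
  · rintro ⟨h1, h2⟩ j k
    fin_cases j <;> fin_cases k <;> first
      | exact iff_of_true h1 (by decide)
      | exact iff_of_true h2 (by decide)
      | exact iff_of_true (lt_trans h1 h2) (by decide)
      | exact iff_of_false (lt_asymm h1) (by decide)
      | exact iff_of_false (lt_asymm h2) (by decide)
      | exact iff_of_false (lt_asymm (lt_trans h1 h2)) (by decide)
      | exact iff_of_false (lt_irrefl _) (by decide)

lemma occ312_iff : ConsecOcc p312 π i ↔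
    (π ⟨i+1, by omega⟩ < π ⟨i+2, by omega⟩ ∧ π ⟨i+2, by omega⟩ < π ⟨i, by omega⟩) := by
  rw [consecOcc_iff _ _ _ h]
  constructor
  · intro H; exact ⟨(H 1 2).mpr (by decide), (H 2 0).mpr (by decide)⟩
  · rintro ⟨h1, h2⟩ j k
    fin_cases j <;> fin_cases k <;> first
      | exact iff_of_true h1 (by decide)
      | exact iff_of_true h2 (by decide)
      | exact iff_of_true (lt_trans h1 h2) (by decide)
      | exact iff_of_false (lt_asymm h1) (by decide)
      | exact iff_of_false (lt_asymm h2) (by decide)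
      | exact iff_of_false (lt_asymm (lt_trans h1 h2)) (by decide)
      | exact iff_of_false (lt_irrefl _) (by decide)

lemma occ321_iff : ConsecOcc p321 π i ↔
    (π ⟨i+2, by omega⟩ < π ⟨i+1, by omega⟩ ∧ π ⟨i+1, by omega⟩ < π ⟨i, by omega⟩) := by
  rw [consecOcc_iff _ _ _ h]
  constructor
  · intro H; exact ⟨(H 2 1).mpr (by decide), (H 1 0).mpr (by decide)⟩
  · rintro ⟨h1, h2⟩ j k
    fin_cases j <;> fin_cases k <;> first
      | exact iff_of_true h1 (by decide)
      | exact iff_of_true h2 (by decide)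
      | exact iff_of_true (lt_trans h1 h2) (by decide)
      | exact iff_of_false (lt_asymm h1) (by decide)
      | exact iff_of_false (lt_asymm h2) (by decide)
      | exact iff_of_false (lt_asymm (lt_trans h1 h2)) (by decide)
      | exact iff_of_false (lt_irrefl _) (by decide)

end PatternIffs

lemma perm_mk_inj {n : ℕ} (π : Equiv.Perm (Fin n)) {x y : ℕ} (hx : x < n) (hy : y < n)
    (hc : π ⟨x, hx⟩ = π ⟨y, hy⟩) : x = y := by
  simpa using congrArg Fin.val (π.injective hc)

/-- For an avoider, each window of length 3 is an occurrence of 213, 231 or 312. -/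
lemma shape_of_avoids {n i : ℕ} (π : Equiv.Perm (Fin n)) (hAv : AvoidsAll Pats π)
    (h : i + 3 ≤ n) :
    ConsecOcc p213 π i ∨ ConsecOcc p231 π i ∨ ConsecOcc p312 π i := by
  have h123 := hAv p123 (by simp [Pats]) i
  have h132 := hAv p132 (by simp [Pats]) i
  have h321 := hAv p321 (by simp [Pats]) i
  rcases lt_trichotomy (π ⟨i, by omega⟩) (π ⟨i+1, by omega⟩) with hab | hab | hab
  · rcases lt_trichotomy (π ⟨i+1, by omega⟩) (π ⟨i+2, by omega⟩) with hbc | hbc | hbc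
    · exact absurd ((occ123_iff π h).mpr ⟨hab, hbc⟩) h123
    · exact absurd (perm_mk_inj π _ _ hbc) (by omega)
    · rcases lt_trichotomy (π ⟨i, by omega⟩) (π ⟨i+2, by omega⟩) with hac | hac | hac
      · exact absurd ((occ132_iff π h).mpr ⟨hac, hbc⟩) h132
      · exact absurd (perm_mk_inj π _ _ hac) (by omega)
      · exact Or.inr (Or.inl ((occ231_iff π h).mpr ⟨hac, hab⟩))
  · exact absurd (perm_mk_inj π _ _ hab) (by omega)
  · rcases lt_trichotomy (π ⟨i, by omega⟩) (π ⟨i+2, by omega⟩) with hac | hac | hac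
    · exact Or.inl ((occ213_iff π h).mpr ⟨hab, hac⟩)
    · exact absurd (perm_mk_inj π _ _ hac) (by omega)
    · rcases lt_trichotomy (π ⟨i+1, by omega⟩) (π ⟨i+2, by omega⟩) with hbc | hbc | hbc
      · exact Or.inr (Or.inr ((occ312_iff π h).mpr ⟨hbc, hac⟩))
      · exact absurd (perm_mk_inj π _ _ hbc) (by omega)
      · exact absurd ((occ321_iff π h).mpr ⟨hbc, hab⟩) h321

/-- In an avoider, the value 0 cannot occur at a position `i` with `i+3 ≤ n`. -/
lemma zero_pos_late {n i : ℕ} (π : Equiv.Perm (Fin n)) (hAv : AvoidsAll Pats π)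
    (h : i + 3 ≤ n) (h0 : (π ⟨i, by omega⟩).val = 0) : False := by
  rcases shape_of_avoids π hAv h with H | H | H
  · have h1 := ((occ213_iff π h).mp H).1
    rw [Fin.lt_def] at h1; omega
  · have h1 := ((occ231_iff π h).mp H).1
    rw [Fin.lt_def] at h1; omega
  · have h1 := ((occ312_iff π h).mp H).2
    rw [Fin.lt_def] at h1; omega
/-! ### Section B : transfer and end-window lemmas -/

/-- Occurrences transfer along an order-isomorphic prefix. -/
lemma transfer {n m : ℕ} (π : Equiv.Perm (Fin n)) (σ : Equiv.Perm (Fin m))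
    (e : Fin m → Fin n) (he : StrictMono e)
    (hp : ∀ (x : ℕ) (hx : x < m) (hx' : x < n), π ⟨x, hx'⟩ = e (σ ⟨x, hx⟩))
    (p : Fin 3 → ℕ) (i : ℕ) (h3 : i + 3 ≤ m) (h3' : i + 3 ≤ n) :
    ConsecOcc p π i ↔ ConsecOcc p σ i := by
  rw [consecOcc_iff _ _ _ h3', consecOcc_iff _ _ _ h3]
  constructor <;> intro H j k
  · rw [← H j k]
    rw [hp (i + j.val) (by have := j.isLt; omega) (by have := j.isLt; omega),
        hp (i + k.val) (by have := k.isLt; omega) (by have := k.isLt; omega),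
        he.lt_iff_lt]
  · rw [← H j k]
    rw [hp (i + j.val) (by have := j.isLt; omega) (by have := j.isLt; omega),
        hp (i + k.val) (by have := k.isLt; omega) (by have := k.isLt; omega),
        he.lt_iff_lt]

/-- No forbidden pattern in a window ending with value 0 preceded by an ascent. -/
lemma notOcc_end0 {n i : ℕ} (π : Equiv.Perm (Fin n)) (h : i + 3 ≤ n)
    (h0 : (π ⟨i+2, by omega⟩).val = 0)
    (hasc : π ⟨i, by omega⟩ < π ⟨i+1, by omega⟩) :
    ∀ p ∈ Pats, ¬ ConsecOcc p π i := by
  intro p hp hocc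
  simp only [Pats, List.mem_cons, List.mem_singleton, List.not_mem_nil, or_false] at hp
  rcases hp with rfl | rfl | rfl
  · have h2 := ((occ123_iff π h).mp hocc).2
    rw [Fin.lt_def] at h2; omega
  · have h1 := ((occ132_iff π h).mp hocc).1
    rw [Fin.lt_def] at h1; omega
  · have h2 := ((occ321_iff π h).mp hocc).2
    exact absurd hasc (lt_asymm h2)

/-- No forbidden pattern in a window whose middle value is 0. -/
lemma notOcc_mid0 {n i : ℕ} (π : Equiv.Perm (Fin n)) (h : i + 3 ≤ n)
    (h0 : (π ⟨i+1, by omega⟩).val = 0) :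
    ∀ p ∈ Pats, ¬ ConsecOcc p π i := by
  intro p hp hocc
  simp only [Pats, List.mem_cons, List.mem_singleton, List.not_mem_nil, or_false] at hp
  rcases hp with rfl | rfl | rfl
  · have h1 := ((occ123_iff π h).mp hocc).1
    rw [Fin.lt_def] at h1; omega
  · have h2 := ((occ132_iff π h).mp hocc).2
    rw [Fin.lt_def] at h2; omega
  · have h1 := ((occ321_iff π h).mp hocc).1
    rw [Fin.lt_def] at h1; omega

/-- In an avoider (size ≥ 3) a window `(a,b,0)` forces `a < b`. -/
lemma asc_before_end0 {n i : ℕ} (π : Equiv.Perm (Fin n)) (hAv : AvoidsAll Pats π)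
    (h : i + 3 ≤ n) (h0 : (π ⟨i+2, by omega⟩).val = 0) :
    π ⟨i, by omega⟩ < π ⟨i+1, by omega⟩ := by
  rcases shape_of_avoids π hAv h with H | H | H
  · have h2 := ((occ213_iff π h).mp H).2
    rw [Fin.lt_def] at h2; omega
  · exact ((occ231_iff π h).mp H).2
  · have h1 := ((occ312_iff π h).mp H).1
    rw [Fin.lt_def] at h1; omega
/-! ### Section C : first bijection, avoiders ending in 0 ↔ ascent-ending avoiders -/

lemma succ_strictMono {m : ℕ} : StrictMono (Fin.succ : Fin m → Fin (m+1)) := by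
  intro a b hab
  rw [Fin.lt_def] at hab ⊢
  simpa using hab

def extFun (j : ℕ) (σ : Equiv.Perm (Fin (j+2))) : Fin (j+3) → Fin (j+3) :=
  fun i => if h : i.val < j+2 then Fin.succ (σ ⟨i.val, h⟩) else 0

lemma extFun_inj (j : ℕ) (σ : Equiv.Perm (Fin (j+2))) : Function.Injective (extFun j σ) := by
  intro a b hab
  unfold extFun at hab
  split_ifs at hab with h1 h2 h2
  · have := σ.injective (Fin.succ_injective _ hab)
    exact Fin.ext (by simpa using congrArg Fin.val this)
  · exact absurd (congrArg Fin.val hab) (by simp)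
  · exact absurd (congrArg Fin.val hab) (by simp)
  · exact Fin.ext (by have := a.isLt; have := b.isLt; omega)

noncomputable def extPerm (j : ℕ) (σ : Equiv.Perm (Fin (j+2))) : Equiv.Perm (Fin (j+3)) :=
  Equiv.ofBijective _ (Finite.injective_iff_bijective.mp (extFun_inj j σ))

lemma extPerm_lt (j : ℕ) (σ : Equiv.Perm (Fin (j+2))) (x : ℕ) (hx : x < j+2) (hx' : x < j+3) :
    extPerm j σ ⟨x, hx'⟩ = Fin.succ (σ ⟨x, hx⟩) := by
  simp [extPerm, Equiv.ofBijective_apply, extFun, hx]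

lemma extPerm_last (j : ℕ) (σ : Equiv.Perm (Fin (j+2))) :
    (extPerm j σ ⟨j+2, by omega⟩).val = 0 := by
  simp [extPerm, Equiv.ofBijective_apply, extFun]

lemma extPerm_avoids (j : ℕ) (σ : Equiv.Perm (Fin (j+2)))
    (hσ : AvoidsAll Pats σ) (hasc : AscEnd σ) : AvoidsAll Pats (extPerm j σ) := by
  intro p hp i hocc
  obtain ⟨hle, -⟩ := id hocc
  by_cases hi : i + 3 ≤ j + 2
  · exact hσ p hp i
      ((transfer (extPerm j σ) σ Fin.succ succ_strictMono (extPerm_lt j σ) p i hi (by omega)).mp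
        hocc)
  · have hij : i = j := by omega
    subst hij
    refine notOcc_end0 (extPerm i σ) (by omega) ?_ ?_ p hp hocc
    · exact extPerm_last i σ
    · rw [extPerm_lt i σ i (by omega) (by omega), extPerm_lt i σ (i+1) (by omega) (by omega)]
      exact succ_strictMono (hasc (by omega))

def shrinkFun (j : ℕ) (π : Equiv.Perm (Fin (j+3))) : Fin (j+2) → Fin (j+2) :=
  fun i => ⟨(π ⟨i.val, by have := i.isLt; omega⟩).val - 1, by
    have := (π ⟨i.val, by have := i.isLt; omega⟩).isLt; omega⟩

lemma shrink_ne (j : ℕ) (π : Equiv.Perm (Fin (j+3)))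
    (h0 : (π ⟨j+2, by omega⟩).val = 0) (x : ℕ) (hx : x < j+2) :
    (π ⟨x, by omega⟩).val ≠ 0 := by
  intro hzero
  have he : π ⟨x, by omega⟩ = π ⟨j+2, by omega⟩ := Fin.ext (by omega)
  have := perm_mk_inj π _ _ he
  omega

lemma shrinkFun_inj (j : ℕ) (π : Equiv.Perm (Fin (j+3)))
    (h0 : (π ⟨j+2, by omega⟩).val = 0) : Function.Injective (shrinkFun j π) := by
  intro a b hab
  have ha := shrink_ne j π h0 a.val a.isLt
  have hb := shrink_ne j π h0 b.val b.isLt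
  have hval := congrArg Fin.val hab
  simp only [shrinkFun] at hval
  have he : π ⟨a.val, by have := a.isLt; omega⟩ = π ⟨b.val, by have := b.isLt; omega⟩ :=
    Fin.ext (by omega)
  exact Fin.ext (perm_mk_inj π _ _ he)

noncomputable def shrinkPerm (j : ℕ) (π : Equiv.Perm (Fin (j+3)))
    (h0 : (π ⟨j+2, by omega⟩).val = 0) : Equiv.Perm (Fin (j+2)) :=
  Equiv.ofBijective _ (Finite.injective_iff_bijective.mp (shrinkFun_inj j π h0))

lemma shrinkPerm_rel (j : ℕ) (π : Equiv.Perm (Fin (j+3)))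
    (h0 : (π ⟨j+2, by omega⟩).val = 0) (x : ℕ) (hx : x < j+2) (hx' : x < j+3) :
    π ⟨x, hx'⟩ = Fin.succ (shrinkPerm j π h0 ⟨x, hx⟩) := by
  have := shrink_ne j π h0 x hx
  refine Fin.ext ?_
  simp only [shrinkPerm, Equiv.ofBijective_apply, shrinkFun, Fin.val_succ]
  omega

set_option maxHeartbeats 1600000 in
lemma card_D (j : ℕ) :
    Nat.card {π : Equiv.Perm (Fin (j+3)) // AvoidsAll Pats π ∧ (π ⟨j+2, by omega⟩).val = 0}
      = Nat.card {σ : Equiv.Perm (Fin (j+2)) // AvoidsAll Pats σ ∧ AscEnd σ} := by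
  refine (Nat.card_eq_of_bijective
    (fun σ => ⟨extPerm j σ.1, extPerm_avoids j σ.1 σ.2.1 σ.2.2, extPerm_last j σ.1⟩) ⟨?_, ?_⟩).symm
  · -- injective
    rintro ⟨σ1, h1⟩ ⟨σ2, h2⟩ heq
    have heq' : extPerm j σ1 = extPerm j σ2 := congrArg Subtype.val heq
    refine Subtype.ext (Equiv.ext fun i => ?_)
    have key : extPerm j σ1 ⟨i.val, by have := i.isLt; omega⟩
        = extPerm j σ2 ⟨i.val, by have := i.isLt; omega⟩ := by rw [heq']
    rw [extPerm_lt j σ1 i.val i.isLt, extPerm_lt j σ2 i.val i.isLt] at key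
    have := Fin.succ_injective _ key
    simpa [Fin.eta] using this
  · -- surjective
    rintro ⟨π, hAv, h0⟩
    have hσAv : AvoidsAll Pats (shrinkPerm j π h0) := by
      intro p hp i hocc
      obtain ⟨hle, -⟩ := id hocc
      exact hAv p hp i
        ((transfer π (shrinkPerm j π h0) Fin.succ succ_strictMono (shrinkPerm_rel j π h0)
          p i hle (by omega)).mpr hocc)
    have hσasc : AscEnd (shrinkPerm j π h0) := by
      intro _
      have key := asc_before_end0 (i := j) π hAv (by omega) h0
      have e1 := shrinkPerm_rel j π h0 j (by omega) (by omega)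
      have e2 := shrinkPerm_rel j π h0 (j+1) (by omega) (by omega)
      rw [e1, e2] at key
      exact succ_strictMono.lt_iff_lt.mp key
    refine ⟨⟨shrinkPerm j π h0, hσAv, hσasc⟩, ?_⟩
    refine Subtype.ext (Equiv.ext fun i => ?_)
    show extPerm j (shrinkPerm j π h0) i = π i
    by_cases hi : i.val < j+2
    · have hieq : (⟨i.val, by have := i.isLt; omega⟩ : Fin (j+3)) = i := Fin.ext rfl
      rw [← hieq, extPerm_lt j _ i.val hi, ← shrinkPerm_rel j π h0 i.val hi]
    · have hiv : i = ⟨j+2, by omega⟩ := by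
        have h1 := i.isLt
        exact Fin.ext (by simp only []; omega)
      rw [hiv]
      exact Fin.ext (by rw [extPerm_last j _, h0])
/-! ### Section D : second bijection, ascent-ending avoiders of size n ↔ (n-1) × size n-2 -/

def liftVal (j : ℕ) (x : Fin (j+3)) (v : Fin (j+2)) : Fin (j+4) :=
  if v.val < x.val then ⟨v.val+1, by have := v.isLt; omega⟩
  else ⟨v.val+2, by have := v.isLt; omega⟩

lemma liftVal_val (j : ℕ) (x : Fin (j+3)) (v : Fin (j+2)) :
    (liftVal j x v).val = if v.val < x.val then v.val+1 else v.val+2 := by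
  unfold liftVal; split_ifs <;> rfl

lemma liftVal_strictMono (j : ℕ) (x : Fin (j+3)) : StrictMono (liftVal j x) := by
  intro a b hab
  rw [Fin.lt_def] at hab ⊢
  rw [liftVal_val, liftVal_val]
  split_ifs <;> omega

def delVal (j : ℕ) (x : Fin (j+3)) (w : Fin (j+4)) : Fin (j+2) :=
  if h : w.val ≤ x.val then ⟨w.val-1, by have := x.isLt; omega⟩
  else ⟨w.val-2, by have := w.isLt; omega⟩

lemma delVal_val (j : ℕ) (x : Fin (j+3)) (w : Fin (j+4)) :
    (delVal j x w).val = if w.val ≤ x.val then w.val-1 else w.val-2 := by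
  unfold delVal; split_ifs <;> rfl

lemma lift_delVal (j : ℕ) (x : Fin (j+3)) (w : Fin (j+4))
    (hw0 : w.val ≠ 0) (hwx : w.val ≠ x.val+1) : liftVal j x (delVal j x w) = w := by
  refine Fin.ext ?_
  rw [liftVal_val, delVal_val]
  split_ifs <;> omega

def insFun (j : ℕ) (x : Fin (j+3)) (σ : Equiv.Perm (Fin (j+2))) : Fin (j+4) → Fin (j+4) :=
  fun i => if h : i.val < j+2 then liftVal j x (σ ⟨i.val, h⟩)
    else if i.val = j+2 then ⟨0, by omega⟩ else ⟨x.val+1, by have := x.isLt; omega⟩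

lemma insFun_inj (j : ℕ) (x : Fin (j+3)) (σ : Equiv.Perm (Fin (j+2))) :
    Function.Injective (insFun j x σ) := by
  intro a b hab
  have hav := a.isLt; have hbv := b.isLt
  unfold insFun at hab
  split_ifs at hab <;> try (exact Fin.ext (by omega))
  · have := σ.injective ((liftVal_strictMono j x).injective hab)
    exact Fin.ext (by simpa using congrArg Fin.val this)
  all_goals exfalso
  all_goals try unfold liftVal at hab
  all_goals
    first
      | (split_ifs at hab <;> simp only [Fin.mk.injEq] at hab <;> omega)
      | (simp only [Fin.mk.injEq] at hab; omega)

noncomputable def insPerm (j : ℕ) (x : Fin (j+3)) (σ : Equiv.Perm (Fin (j+2))) :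
    Equiv.Perm (Fin (j+4)) :=
  Equiv.ofBijective _ (Finite.injective_iff_bijective.mp (insFun_inj j x σ))

lemma insPerm_lt (j : ℕ) (x : Fin (j+3)) (σ : Equiv.Perm (Fin (j+2)))
    (y : ℕ) (hy : y < j+2) (hy' : y < j+4) :
    insPerm j x σ ⟨y, hy'⟩ = liftVal j x (σ ⟨y, hy⟩) := by
  simp [insPerm, Equiv.ofBijective_apply, insFun, hy]

lemma insPerm_m (j : ℕ) (x : Fin (j+3)) (σ : Equiv.Perm (Fin (j+2))) :
    (insPerm j x σ ⟨j+2, by omega⟩).val = 0 := by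
  simp [insPerm, Equiv.ofBijective_apply, insFun]

lemma insPerm_last (j : ℕ) (x : Fin (j+3)) (σ : Equiv.Perm (Fin (j+2))) :
    (insPerm j x σ ⟨j+3, by omega⟩).val = x.val + 1 := by
  simp [insPerm, Equiv.ofBijective_apply, insFun]

lemma insPerm_avoids (j : ℕ) (x : Fin (j+3)) (σ : Equiv.Perm (Fin (j+2)))
    (hσ : AvoidsAll Pats σ) (hasc : AscEnd σ) : AvoidsAll Pats (insPerm j x σ) := by
  intro p hp i hocc
  obtain ⟨hle, -⟩ := id hocc
  by_cases hi : i + 3 ≤ j + 2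
  · exact hσ p hp i
      ((transfer (insPerm j x σ) σ (liftVal j x) (liftVal_strictMono j x)
        (fun y hy hy' => insPerm_lt j x σ y hy hy') p i hi (by omega)).mp hocc)
  · by_cases hij : i = j
    · subst hij
      refine notOcc_end0 (insPerm i x σ) (by omega) ?_ ?_ p hp hocc
      · exact insPerm_m i x σ
      · rw [insPerm_lt i x σ i (by omega) (by omega),
          insPerm_lt i x σ (i+1) (by omega) (by omega)]
        exact liftVal_strictMono i x (hasc (by omega))
    · have hij2 : i = j + 1 := by omega
      subst hij2
      refine notOcc_mid0 (insPerm j x σ) (by omega) ?_ p hp hocc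
      exact insPerm_m j x σ

lemma insPerm_asc (j : ℕ) (x : Fin (j+3)) (σ : Equiv.Perm (Fin (j+2))) :
    AscEnd (insPerm j x σ) := by
  intro _
  show insPerm j x σ ⟨j+2, by omega⟩ < insPerm j x σ ⟨j+3, by omega⟩
  rw [Fin.lt_def, insPerm_m j x σ, insPerm_last j x σ]
  omega

noncomputable def xOf (j : ℕ) (π : Equiv.Perm (Fin (j+4))) : Fin (j+3) :=
  ⟨(π ⟨j+3, by omega⟩).val - 1, by have := (π ⟨j+3, by omega⟩).isLt; omega⟩

lemma last_ne0 (j : ℕ) (π : Equiv.Perm (Fin (j+4)))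
    (h0 : (π ⟨j+2, by omega⟩).val = 0) : (π ⟨j+3, by omega⟩).val ≠ 0 := by
  intro hzero
  have he : π ⟨j+3, by omega⟩ = π ⟨j+2, by omega⟩ := Fin.ext (by omega)
  have := perm_mk_inj π _ _ he
  omega

lemma xOf_val (j : ℕ) (π : Equiv.Perm (Fin (j+4)))
    (h0 : (π ⟨j+2, by omega⟩).val = 0) : (xOf j π).val + 1 = (π ⟨j+3, by omega⟩).val := by
  have := last_ne0 j π h0
  simp only [xOf]
  omega

lemma prefix_ne (j : ℕ) (π : Equiv.Perm (Fin (j+4)))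
    (h0 : (π ⟨j+2, by omega⟩).val = 0) (y : ℕ) (hy : y < j+2) :
    (π ⟨y, by omega⟩).val ≠ 0 ∧ (π ⟨y, by omega⟩).val ≠ (xOf j π).val + 1 := by
  constructor
  · intro hzero
    have he : π ⟨y, by omega⟩ = π ⟨j+2, by omega⟩ := Fin.ext (by omega)
    have := perm_mk_inj π _ _ he
    omega
  · rw [xOf_val j π h0]
    intro heq
    have he : π ⟨y, by omega⟩ = π ⟨j+3, by omega⟩ := Fin.ext (by omega)
    have := perm_mk_inj π _ _ he
    omega

noncomputable def delFun (j : ℕ) (π : Equiv.Perm (Fin (j+4))) : Fin (j+2) → Fin (j+2) :=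
  fun i => delVal j (xOf j π) (π ⟨i.val, by have := i.isLt; omega⟩)

lemma delFun_inj (j : ℕ) (π : Equiv.Perm (Fin (j+4)))
    (h0 : (π ⟨j+2, by omega⟩).val = 0) : Function.Injective (delFun j π) := by
  intro a b hab
  have ha := prefix_ne j π h0 a.val a.isLt
  have hb := prefix_ne j π h0 b.val b.isLt
  have : π ⟨a.val, by have := a.isLt; omega⟩ = π ⟨b.val, by have := b.isLt; omega⟩ := by
    rw [← lift_delVal j (xOf j π) (π ⟨a.val, by have := a.isLt; omega⟩) ha.1 ha.2,
        ← lift_delVal j (xOf j π) (π ⟨b.val, by have := b.isLt; omega⟩) hb.1 hb.2]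
    exact congrArg _ hab
  exact Fin.ext (perm_mk_inj π _ _ this)

noncomputable def delPerm (j : ℕ) (π : Equiv.Perm (Fin (j+4)))
    (h0 : (π ⟨j+2, by omega⟩).val = 0) : Equiv.Perm (Fin (j+2)) :=
  Equiv.ofBijective _ (Finite.injective_iff_bijective.mp (delFun_inj j π h0))

lemma delPerm_rel (j : ℕ) (π : Equiv.Perm (Fin (j+4)))
    (h0 : (π ⟨j+2, by omega⟩).val = 0) (y : ℕ) (hy : y < j+2) (hy' : y < j+4) :
    π ⟨y, hy'⟩ = liftVal j (xOf j π) (delPerm j π h0 ⟨y, hy⟩) := by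
  have h := prefix_ne j π h0 y hy
  exact (lift_delVal j (xOf j π) (π ⟨y, by omega⟩) h.1 h.2).symm

lemma delPerm_avoids (j : ℕ) (π : Equiv.Perm (Fin (j+4))) (hAv : AvoidsAll Pats π)
    (h0 : (π ⟨j+2, by omega⟩).val = 0) : AvoidsAll Pats (delPerm j π h0) := by
  intro p hp i hocc
  obtain ⟨hle, -⟩ := id hocc
  exact hAv p hp i
    ((transfer π (delPerm j π h0) (liftVal j (xOf j π)) (liftVal_strictMono j (xOf j π))
      (delPerm_rel j π h0) p i hle (by omega)).mpr hocc)

set_option maxHeartbeats 1600000 in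
lemma delPerm_asc (j : ℕ) (π : Equiv.Perm (Fin (j+4))) (hAv : AvoidsAll Pats π)
    (h0 : (π ⟨j+2, by omega⟩).val = 0) : AscEnd (delPerm j π h0) := by
  intro _
  have key := asc_before_end0 (i := j) π hAv (by omega) h0
  have e1 := delPerm_rel j π h0 j (by omega) (by omega)
  have e2 := delPerm_rel j π h0 (j+1) (by omega) (by omega)
  rw [e1, e2] at key
  exact (liftVal_strictMono j (xOf j π)).lt_iff_lt.mp key

lemma mid_zero (j : ℕ) (π : Equiv.Perm (Fin (j+4))) (hAv : AvoidsAll Pats π)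
    (hasc : AscEnd π) : (π ⟨j+2, by omega⟩).val = 0 := by
  set k := π.symm 0 with hkdef
  have hk : π k = 0 := Equiv.apply_symm_apply π 0
  have hk' : (π ⟨k.val, by have := k.isLt; omega⟩).val = 0 := by
    rw [show (⟨k.val, by have := k.isLt; omega⟩ : Fin (j+4)) = k from Fin.ext rfl, hk]
    rfl
  have hklarge : ¬ (k.val + 3 ≤ j + 4) := fun hc => zero_pos_late π hAv hc hk'
  have hkcases : k.val = j+2 ∨ k.val = j+3 := by have := k.isLt; omega
  rcases hkcases with hkv | hkv
  · rw [show (⟨j+2, by omega⟩ : Fin (j+4)) = ⟨k.val, by have := k.isLt; omega⟩ from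
      Fin.ext hkv.symm]
    exact hk'
  · exfalso
    have := hasc (by omega)
    rw [Fin.lt_def] at this
    have he : (⟨j+4-1, by omega⟩ : Fin (j+4)) = ⟨k.val, by have := k.isLt; omega⟩ :=
      Fin.ext (show j+4-1 = k.val by omega)
    rw [he, hk'] at this
    omega

lemma card_step (j : ℕ) :
    Nat.card {π : Equiv.Perm (Fin (j+4)) // AvoidsAll Pats π ∧ AscEnd π}
      = (j+3) * Nat.card {σ : Equiv.Perm (Fin (j+2)) // AvoidsAll Pats σ ∧ AscEnd σ} := by
  have hbij : Function.Bijective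
      (fun q : Fin (j+3) × {σ : Equiv.Perm (Fin (j+2)) // AvoidsAll Pats σ ∧ AscEnd σ} =>
        (⟨insPerm j q.1 q.2.1, insPerm_avoids j q.1 q.2.1 q.2.2.1 q.2.2.2,
          insPerm_asc j q.1 q.2.1⟩ :
          {π : Equiv.Perm (Fin (j+4)) // AvoidsAll Pats π ∧ AscEnd π})) := by
    constructor
    · rintro ⟨x1, σ1, hσ1⟩ ⟨x2, σ2, hσ2⟩ heq
      have heq' : insPerm j x1 σ1 = insPerm j x2 σ2 := congrArg Subtype.val heq
      have h3 : (insPerm j x1 σ1 ⟨j+3, by omega⟩).val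
          = (insPerm j x2 σ2 ⟨j+3, by omega⟩).val := by rw [heq']
      rw [insPerm_last, insPerm_last] at h3
      have hx : x1 = x2 := Fin.ext (by omega)
      subst hx
      have hσ : σ1 = σ2 := by
        refine Equiv.ext fun i => ?_
        have hi : insPerm j x1 σ1 ⟨i.val, by have := i.isLt; omega⟩
            = insPerm j x1 σ2 ⟨i.val, by have := i.isLt; omega⟩ := by rw [heq']
        rw [insPerm_lt j x1 σ1 i.val i.isLt, insPerm_lt j x1 σ2 i.val i.isLt] at hi
        have := (liftVal_strictMono j x1).injective hi
        simpa [Fin.eta] using this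
      subst hσ
      rfl
    · rintro ⟨π, hAv, hasc⟩
      have h0 := mid_zero j π hAv hasc
      refine ⟨⟨xOf j π, ⟨delPerm j π h0, delPerm_avoids j π hAv h0, delPerm_asc j π hAv h0⟩⟩, ?_⟩
      refine Subtype.ext (Equiv.ext fun i => ?_)
      show insPerm j (xOf j π) (delPerm j π h0) i = π i
      have hiv := i.isLt
      by_cases hi : i.val < j+2
      · have hieq : (⟨i.val, by omega⟩ : Fin (j+4)) = i := Fin.ext rfl
        rw [← hieq, insPerm_lt j _ _ i.val hi, ← delPerm_rel j π h0 i.val hi]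
      · by_cases hi2 : i.val = j+2
        · have hieq : i = (⟨j+2, by omega⟩ : Fin (j+4)) := Fin.ext hi2
          rw [hieq]
          exact Fin.ext (by rw [insPerm_m, h0])
        · have hieq : i = (⟨j+3, by omega⟩ : Fin (j+4)) := Fin.ext (show i.val = j+3 by omega)
          rw [hieq]
          refine Fin.ext ?_
          rw [insPerm_last, xOf_val j π h0]
  calc Nat.card {π : Equiv.Perm (Fin (j+4)) // AvoidsAll Pats π ∧ AscEnd π}
      = Nat.card (Fin (j+3) × {σ : Equiv.Perm (Fin (j+2)) // AvoidsAll Pats σ ∧ AscEnd σ}) :=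
        (Nat.card_eq_of_bijective _ hbij).symm
    _ = (j+3) * Nat.card {σ : Equiv.Perm (Fin (j+2)) // AvoidsAll Pats σ ∧ AscEnd σ} := by
        rw [Nat.card_prod, Nat.card_eq_fintype_card, Fintype.card_fin]
/-! ### Section E : counting -/

lemma card_partition {α : Type*} [Fintype α] (P Q R : α → Prop)
    (h : ∀ a, P a ↔ (Q a ∨ R a)) (hd : ∀ a, Q a → R a → False) :
    Nat.card {a // P a} = Nat.card {a // Q a} + Nat.card {a // R a} := by
  classical
  rw [Nat.card_eq_fintype_card, Nat.card_eq_fintype_card, Nat.card_eq_fintype_card,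
    Fintype.card_subtype, Fintype.card_subtype, Fintype.card_subtype]
  have hu : Finset.univ.filter P = (Finset.univ.filter Q) ∪ (Finset.univ.filter R) := by
    ext a
    simp [h a]
  rw [hu, Finset.card_union_of_disjoint]
  rw [Finset.disjoint_left]
  intro a ha hb
  simp only [Finset.mem_filter, Finset.mem_univ, true_and] at ha hb
  exact hd a ha hb

lemma card_split (j : ℕ) :
    Nat.card {π : Equiv.Perm (Fin (j+3)) // AvoidsAll Pats π}
      = Nat.card {π : Equiv.Perm (Fin (j+3)) // AvoidsAll Pats π ∧ AscEnd π}
        + Nat.card {π : Equiv.Perm (Fin (j+3)) // AvoidsAll Pats π ∧ (π ⟨j+2, by omega⟩).val = 0} := by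
  refine card_partition _ _ _ (fun π => ?_) (fun π hq hr => ?_)
  · constructor
    · intro hAv
      set k := π.symm 0 with hkdef
      have hk : π k = 0 := Equiv.apply_symm_apply π 0
      have hk' : (π ⟨k.val, by have := k.isLt; omega⟩).val = 0 := by
        rw [show (⟨k.val, by have := k.isLt; omega⟩ : Fin (j+3)) = k from Fin.ext rfl, hk]
        rfl
      have hklarge : ¬ (k.val + 3 ≤ j + 3) := fun hc => zero_pos_late π hAv hc hk'
      have hkcases : k.val = j+1 ∨ k.val = j+2 := by have := k.isLt; omega
      rcases hkcases with hkv | hkv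
      · -- 0 is at position j+1, hence ascent at the end
        left
        refine ⟨hAv, fun _ => ?_⟩
        show π ⟨j+1, by omega⟩ < π ⟨j+2, by omega⟩
        have h1 : (π ⟨j+1, by omega⟩).val = 0 := by
          rw [show (⟨j+1, by omega⟩ : Fin (j+3)) = ⟨k.val, by have := k.isLt; omega⟩ from
            Fin.ext hkv.symm]
          exact hk'
        have h2 : (π ⟨j+2, by omega⟩).val ≠ 0 := by
          intro hc
          have he : π ⟨j+2, by omega⟩ = π ⟨j+1, by omega⟩ := Fin.ext (by omega)
          have := perm_mk_inj π _ _ he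
          omega
        rw [Fin.lt_def]
        omega
      · right
        refine ⟨hAv, ?_⟩
        rw [show (⟨j+2, by omega⟩ : Fin (j+3)) = ⟨k.val, by have := k.isLt; omega⟩ from
          Fin.ext hkv.symm]
        exact hk'
    · rintro (⟨hAv, -⟩ | ⟨hAv, -⟩) <;> exact hAv
  · -- disjoint
    have hasc := hq.2 (by omega)
    have h0 := hr.2
    rw [Fin.lt_def] at hasc
    have he : (⟨j+3-1, by omega⟩ : Fin (j+3)) = ⟨j+2, by omega⟩ := Fin.ext rfl
    rw [he, h0] at hasc
    omega

lemma occ_subtype_card {n : ℕ} (p : Fin 3 → ℕ) (π : Equiv.Perm (Fin n)) :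
    occCount p π = {i : ℕ | ConsecOcc p π i}.ncard :=
  Nat.card_coe_set_eq _

lemma occ_sum {n : ℕ} (π : Equiv.Perm (Fin n)) (hAv : AvoidsAll Pats π) :
    occCount p213 π + occCount p231 π + occCount p312 π = n - 2 := by
  have hsub : ∀ p : Fin 3 → ℕ, {i : ℕ | ConsecOcc p π i} ⊆ Set.Iio (n-2) := by
    intro p i hi
    obtain ⟨h, -⟩ := id hi
    simp only [Set.mem_Iio]
    omega
  have hfin : ∀ p : Fin 3 → ℕ, {i : ℕ | ConsecOcc p π i}.Finite :=
    fun p => (Set.finite_Iio (n-2)).subset (hsub p)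
  have hd1 : Disjoint {i : ℕ | ConsecOcc p213 π i} {i : ℕ | ConsecOcc p231 π i} := by
    rw [Set.disjoint_left]
    intro i h1 h2
    obtain ⟨h, -⟩ := id h1
    have a1 := ((occ213_iff π h).mp h1).1
    have a2 := ((occ231_iff π h).mp h2).2
    exact absurd a2 (lt_asymm a1)
  have hd2 : Disjoint ({i : ℕ | ConsecOcc p213 π i} ∪ {i : ℕ | ConsecOcc p231 π i})
      {i : ℕ | ConsecOcc p312 π i} := by
    rw [Set.disjoint_left]
    rintro i (h1 | h1) h2
    · obtain ⟨h, -⟩ := id h1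
      have a1 := ((occ213_iff π h).mp h1).2
      have a2 := ((occ312_iff π h).mp h2).2
      exact absurd a2 (lt_asymm a1)
    · obtain ⟨h, -⟩ := id h1
      have a1 := ((occ231_iff π h).mp h1).1
      have a2 := ((occ312_iff π h).mp h2).1
      have a3 := ((occ231_iff π h).mp h1).2
      exact absurd (lt_trans a2 a1) (lt_asymm a3)
  have hunion : {i : ℕ | ConsecOcc p213 π i} ∪ {i : ℕ | ConsecOcc p231 π i}
      ∪ {i : ℕ | ConsecOcc p312 π i} = Set.Iio (n-2) := by
    apply Set.Subset.antisymm
    · intro i hi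
      rcases hi with (hi | hi) | hi
      · exact hsub _ hi
      · exact hsub _ hi
      · exact hsub _ hi
    · intro i hi
      simp only [Set.mem_Iio] at hi
      have h3 : i + 3 ≤ n := by omega
      rcases shape_of_avoids π hAv h3 with H | H | H
      · exact Or.inl (Or.inl H)
      · exact Or.inl (Or.inr H)
      · exact Or.inr H
  rw [occ_subtype_card, occ_subtype_card, occ_subtype_card]
  rw [← Set.ncard_union_eq hd1 (hfin _) (hfin _)]
  rw [← Set.ncard_union_eq hd2 ((hfin _).union (hfin _)) (hfin _)]
  rw [hunion, ← Finset.coe_range, Set.ncard_coe_finset, Finset.card_range]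
/-! ### Section F : assembly -/

lemma base_B2 : Nat.card {π : Equiv.Perm (Fin 2) // AvoidsAll Pats π ∧ AscEnd π} = 1 := by
  rw [Nat.card_eq_fintype_card]; decide

lemma base_B3 : Nat.card {π : Equiv.Perm (Fin 3) // AvoidsAll Pats π ∧ AscEnd π} = 2 := by
  rw [Nat.card_eq_fintype_card]; decide

lemma base_A2 : Nat.card {π : Equiv.Perm (Fin 2) // AvoidsAll Pats π} = 2 := by
  rw [Nat.card_eq_fintype_card]; decide

lemma B_val : ∀ k : ℕ, Nat.card {π : Equiv.Perm (Fin (k+2)) // AvoidsAll Pats π ∧ AscEnd π}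
    = Nat.doubleFactorial (k+1) := by
  intro k
  induction k using Nat.strong_induction_on with
  | _ k ih =>
    match k with
    | 0 => exact base_B2
    | 1 => exact base_B3
    | (m+2) =>
      rw [show m+2+2 = m+4 from rfl, card_step m, ih m (by omega)]
      show (m+3) * Nat.doubleFactorial (m+1) = Nat.doubleFactorial ((m+1)+2)
      rw [Nat.doubleFactorial_add_two]

lemma classCard_val (j : ℕ) :
    Nat.card {π : Equiv.Perm (Fin (j+3)) // AvoidsAll Pats π}
      = Nat.doubleFactorial (j+2) + Nat.doubleFactorial (j+1) := by
  rw [card_split j, card_D j]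
  rw [show j+3 = (j+1)+2 from rfl, B_val (j+1), B_val j]

theorem classCard_final (n : ℕ) (hn : 2 ≤ n) :
    classCard n (AvoidsAll [p123, p132, p321])
      = Nat.doubleFactorial (n - 1) + Nat.doubleFactorial (n - 2) := by
  show Nat.card {π : Equiv.Perm (Fin n) // AvoidsAll Pats π} = _
  match n, hn with
  | 2, _ => rw [base_A2]; rfl
  | (j+3), _ =>
    rw [classCard_val j]
    rfl

theorem totOcc_final (n : ℕ) (hn : 2 ≤ n) :
    totOcc p213 (AvoidsAll (n := n) [p123, p132, p321])
      + totOcc p231 (AvoidsAll (n := n) [p123, p132, p321])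
      + totOcc p312 (AvoidsAll (n := n) [p123, p132, p321])
      = (n - 2) * classCard n (AvoidsAll [p123, p132, p321]) := by
  have tot_eq : ∀ p : Fin 3 → ℕ, totOcc p (AvoidsAll (n := n) [p123, p132, p321])
      = ∑ π : Equiv.Perm (Fin n), if AvoidsAll [p123, p132, p321] π then occCount p π else 0 := by
    intro p
    rw [totOcc]
    refine Finset.sum_congr rfl (fun π _ => ?_)
    by_cases h : AvoidsAll [p123, p132, p321] π <;> simp [h]
  rw [tot_eq, tot_eq, tot_eq, ← Finset.sum_add_distrib, ← Finset.sum_add_distrib]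
  have step1 : ∀ π : Equiv.Perm (Fin n),
      ((if AvoidsAll [p123, p132, p321] π then occCount p213 π else 0)
        + (if AvoidsAll [p123, p132, p321] π then occCount p231 π else 0)
        + (if AvoidsAll [p123, p132, p321] π then occCount p312 π else 0))
      = (if AvoidsAll [p123, p132, p321] π then n - 2 else 0) := by
    intro π
    by_cases h : AvoidsAll [p123, p132, p321] π
    · simp only [if_pos h]
      exact occ_sum π h
    · simp only [if_neg h, add_zero]
  simp only [step1]
  rw [← Finset.sum_filter]
  rw [Finset.sum_const, smul_eq_mul]
  rw [classCard, Nat.card_eq_fintype_card, Fintype.card_subtype]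
  ring

theorem stmt2 (n : ℕ) (hn : 2 ≤ n) :
    totOcc p213 (AvoidsAll (n := n) [p123, p132, p321])
      + totOcc p231 (AvoidsAll (n := n) [p123, p132, p321])
      + totOcc p312 (AvoidsAll (n := n) [p123, p132, p321])
      = (n - 2) * (Nat.doubleFactorial (n - 1) + Nat.doubleFactorial (n - 2))
    ∧ classCard n (AvoidsAll [p123, p132, p321])
      = Nat.doubleFactorial (n - 1) + Nat.doubleFactorial (n - 2) := by
  refine ⟨?_, classCard_final n hn⟩
  rw [totOcc_final n hn, classCard_final n hn]
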